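/- (Box structure of auxiliary preimages.) Let P be an autoregressive model over Fin V, let s be a context, and let Φ : [0,1)^n → (Fin V)^n map auxiliaries to the tokens of the PTP recursion. For every target sequence (a_1, …, a_n) ∈ (Fin V)^n, the preimage {u ∈ [0,1)^n : Φ(u) = (a_1, …, a_n)} is exactly the product of half-open intervals ∏_{k=1}^{n} [F_k(a_k - 1), F_k(a_k)), where F_k is the CDF of the probability vector P(·∣ s ++ [a_1, …, a_{k-1}]) and F_k(a_k - 1) denotes the cumulative sum strictly below a_k. -/
import Mathlib


open MeasureTheory

def IsProbVec {V : ℕ} (p : Fin V → ℝ) : Prop :=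
  (∀ j, 0 ≤ p j) ∧ ∑ j, p j = 1

def cdf {V : ℕ} (p : Fin V → ℝ) (j : Fin V) : ℝ :=
  ∑ l ∈ Finset.Iic j, p l

def cdfLt {V : ℕ} (p : Fin V → ℝ) (j : Fin V) : ℝ :=
  ∑ l ∈ Finset.Iio j, p l

open Classical in
noncomputable def pick {V : ℕ} [NeZero V] (p : Fin V → ℝ) (u : ℝ) : Fin V :=
  if h : (Finset.univ.filter fun j => u < cdf p j).Nonempty then
    (Finset.univ.filter fun j => u < cdf p j).min' h
  else ⟨0, Nat.pos_of_ne_zero (NeZero.ne V)⟩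

/-- Tokens generated so far by the PTP recursion: `ptpPrefix P s u k = [t_1, …, t_k]`. -/
noncomputable def ptpPrefix {V : ℕ} [NeZero V] (P : List (Fin V) → Fin V → ℝ)
    (s : List (Fin V)) (u : ℕ → ℝ) : ℕ → List (Fin V)
  | 0 => []
  | k + 1 => ptpPrefix P s u k ++ [pick (P (s ++ ptpPrefix P s u k)) (u k)]

/-- The `(k+1)`-st token of the PTP recursion (0-indexed `k`):
`t_{k+1} = Pick(u_{k+1}, P(·∣ s ++ [t_1, …, t_k]))`. -/
noncomputable def ptpTok {V : ℕ} [NeZero V] (P : List (Fin V) → Fin V → ℝ)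
    (s : List (Fin V)) (u : ℕ → ℝ) (k : ℕ) : Fin V :=
  pick (P (s ++ ptpPrefix P s u k)) (u k)

/-- The PTP map `Φ : [0,1)^n → (Fin V)^n` sending auxiliaries to the generated tokens. -/
noncomputable def ptpMap {V : ℕ} [NeZero V] (P : List (Fin V) → Fin V → ℝ)
    (s : List (Fin V)) {n : ℕ} (u : Fin n → ℝ) (k : Fin n) : Fin V :=
  ptpTok P s (fun i => if h : i < n then u ⟨i, h⟩ else 0) k

/-- The list `[a_1, …, a_{j-1}]` of tokens strictly before position `j`. -/
def tokPrefix {V m : ℕ} (a : Fin m → Fin V) (j : Fin m) : List (Fin V) :=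
  List.ofFn (fun i : Fin j.1 => a (Fin.castLE j.2.le i))

lemma cdfLt_nonneg {V : ℕ} {p : Fin V → ℝ} (hp : ∀ j, 0 ≤ p j) (j : Fin V) :
    0 ≤ cdfLt p j := Finset.sum_nonneg fun l _ => hp l

lemma cdf_le_one {V : ℕ} {p : Fin V → ℝ} (hp : IsProbVec p) (j : Fin V) :
    cdf p j ≤ 1 := by
  rw [← hp.2]
  exact Finset.sum_le_sum_of_subset_of_nonneg (Finset.subset_univ _) fun l _ _ => hp.1 l

lemma cdf_le_cdfLt {V : ℕ} {p : Fin V → ℝ} (hp : ∀ j, 0 ≤ p j) {i j : Fin V} (hij : i < j) :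
    cdf p i ≤ cdfLt p j := by
  apply Finset.sum_le_sum_of_subset_of_nonneg _ fun l _ _ => hp l
  intro l hl
  simp only [Finset.mem_Iic] at hl
  simp only [Finset.mem_Iio]
  exact lt_of_le_of_lt hl hij

open Classical in
lemma pick_eq_iff {V : ℕ} [NeZero V] {p : Fin V → ℝ} (hp : IsProbVec p) {u : ℝ}
    (hu0 : 0 ≤ u) (hu1 : u < 1) (j : Fin V) :
    pick p u = j ↔ cdfLt p j ≤ u ∧ u < cdf p j := by
  have hV : 0 < V := Nat.pos_of_ne_zero (NeZero.ne V)
  have hlast : cdf p ⟨V - 1, Nat.sub_lt hV one_pos⟩ = 1 := by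
    rw [← hp.2, cdf]
    congr 1
    ext l
    simp [Fin.le_def, Nat.le_sub_one_of_lt l.2]
  have hne : (Finset.univ.filter fun j => u < cdf p j).Nonempty :=
    ⟨⟨V - 1, Nat.sub_lt hV one_pos⟩, by simp [hlast, hu1]⟩
  rw [pick, dif_pos hne]
  constructor
  · intro h
    have hjmem : j ∈ Finset.univ.filter fun j => u < cdf p j := h ▸ Finset.min'_mem _ hne
    have hj : u < cdf p j := (Finset.mem_filter.mp hjmem).2
    refine ⟨?_, hj⟩
    rcases Nat.eq_zero_or_pos j.1 with h0 | h0
    · have : cdfLt p j = 0 := by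
        rw [cdfLt]
        convert Finset.sum_empty
        ext l
        simp [Fin.lt_def, h0]
      rw [this]; exact hu0
    · set j' : Fin V := ⟨j.1 - 1, lt_trans (Nat.sub_lt h0 one_pos) j.2⟩ with hj'
      have hlt : j' < j := by simp [Fin.lt_def, hj', Nat.sub_lt h0 one_pos]
      have hnot : j' ∉ Finset.univ.filter fun j => u < cdf p j := by
        intro hmem
        exact absurd (h ▸ Finset.min'_le _ _ hmem) (not_le.mpr hlt)
      have : ¬ u < cdf p j' := by simpa using hnot
      have heq : cdfLt p j = cdf p j' := by
        rw [cdfLt, cdf]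
        congr 1
        ext l
        simp only [Finset.mem_Iio, Finset.mem_Iic, Fin.lt_def, Fin.le_def, hj']
        omega
      rw [heq]
      exact not_lt.mp this
  · rintro ⟨h1, h2⟩
    have hjmem : j ∈ Finset.univ.filter fun j => u < cdf p j := by simp [h2]
    refine le_antisymm (Finset.min'_le _ _ hjmem) ?_
    by_contra hlt
    push_neg at hlt
    have hm := Finset.min'_mem _ hne
    have : u < cdf p (_root_.Finset.min' _ hne) := (Finset.mem_filter.mp hm).2
    exact absurd this (not_lt.mpr (le_trans (cdf_le_cdfLt hp.1 hlt) h1))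
-- main theorem proof attempt, appended to defs+aux
/-- **Box structure of auxiliary preimages.** For every target sequence `(a_1, …, a_n)`, the
preimage `{u ∈ [0,1)^n : Φ(u) = a}` under the PTP map is exactly the product of half-open
intervals `∏_k [F_k(a_k - 1), F_k(a_k))`, where `F_k` is the CDF of
`P(·∣ s ++ [a_1, …, a_{k-1}])`. -/
theorem ptp_preimage_eq_box {V : ℕ} [NeZero V] {n : ℕ}
    (P : List (Fin V) → Fin V → ℝ) (hP : ∀ s, IsProbVec (P s))
    (s : List (Fin V)) (a : Fin n → Fin V) :
    {u : Fin n → ℝ | (∀ k, u k ∈ Set.Ico (0 : ℝ) 1) ∧ ptpMap P s u = a} =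
      Set.pi Set.univ (fun k => Set.Ico
        (cdfLt (P (s ++ tokPrefix a k)) (a k)) (cdf (P (s ++ tokPrefix a k)) (a k))) := by
  ext u
  simp only [Set.mem_setOf_eq, Set.mem_pi, Set.mem_univ, forall_true_left, Set.mem_Ico]
  set u' : ℕ → ℝ := fun i => if h : i < n then u ⟨i, h⟩ else 0 with hu'def
  have hu'eq : ∀ k : Fin n, u' k.1 = u k := by
    intro k; simp [hu'def, k.2]
  have hofn : ∀ (k : ℕ) (hk : k + 1 ≤ n),
      (List.ofFn fun i : Fin (k+1) => a (Fin.castLE hk i)) =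
      (List.ofFn fun i : Fin k => a (Fin.castLE (Nat.le_of_succ_le hk) i)) ++ [a ⟨k, hk⟩] := by
    intro k hk
    rw [List.ofFn_succ']
    simp only [List.concat_eq_append]
    rfl
  constructor
  · rintro ⟨hbound, hmap⟩
    have htok : ∀ k : Fin n, pick (P (s ++ ptpPrefix P s u' k.1)) (u' k.1) = a k :=
      fun k => congrFun hmap k
    have hpre : ∀ k : ℕ, ∀ hk : k ≤ n,
        ptpPrefix P s u' k = List.ofFn (fun i : Fin k => a (Fin.castLE hk i)) := by
      intro k
      induction k with
      | zero => intro _; rfl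
      | succ k ih =>
        intro hk
        rw [ptpPrefix, ih (Nat.le_of_succ_le hk), hofn k hk]
        congr 2
        · rw [← ih (Nat.le_of_succ_le hk)]
          exact htok ⟨k, hk⟩
    intro k
    have h1 := htok k
    rw [hpre k.1 k.2.le, hu'eq k] at h1
    have h2 : (List.ofFn fun i : Fin k.1 => a (Fin.castLE k.2.le i)) = tokPrefix a k := rfl
    rw [h2] at h1
    exact (pick_eq_iff (hP _) (hbound k).1 (hbound k).2 (a k)).mp h1
  · intro hbox
    have hbound : ∀ k : Fin n, 0 ≤ u k ∧ u k < 1 := by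
      intro k
      exact ⟨le_trans (cdfLt_nonneg (hP _).1 _) (hbox k).1,
        lt_of_lt_of_le (hbox k).2 (cdf_le_one (hP _) _)⟩
    have hpre : ∀ k : ℕ, ∀ hk : k ≤ n,
        ptpPrefix P s u' k = List.ofFn (fun i : Fin k => a (Fin.castLE hk i)) := by
      intro k
      induction k with
      | zero => intro _; rfl
      | succ k ih =>
        intro hk
        rw [ptpPrefix, ih (Nat.le_of_succ_le hk), hofn k hk]
        congr 2
        set kf : Fin n := ⟨k, hk⟩ with hkf
        have h2 : (List.ofFn fun i : Fin k => a (Fin.castLE (Nat.le_of_succ_le hk) i)) =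
            tokPrefix a kf := rfl
        rw [h2, hu'eq kf]
        exact (pick_eq_iff (hP _) (hbound kf).1 (hbound kf).2 (a kf)).mpr (hbox kf)
    refine ⟨fun k => hbound k, ?_⟩
    funext k
    show pick (P (s ++ ptpPrefix P s u' k.1)) (u' k.1) = a k
    rw [hpre k.1 k.2.le, hu'eq k]
    have h2 : (List.ofFn fun i : Fin k.1 => a (Fin.castLE k.2.le i)) = tokPrefix a k := rfl
    rw [h2]
    exact (pick_eq_iff (hP _) (hbound k).1 (hbound k).2 (a k)).mpr (hbox k)
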